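/- Let $(s,t)\mapsto w(s,t)$ and $(s,t)\mapsto w_*(s,t)$ be controls, $\zeta>1$, $k:[0,T]\to\R_{\ge0}$, and $g:\Delta_T\to\R^d$ continuous with $|\delta g_{sut}| \le w(s,t)^{\zeta}(1+k_s)$ for all $s<u<t$ and $|g_{st}|\le w_*(s,t)^{\zeta}$. Then there is a universal constant $C=C(\zeta)$ such that $|g_{st}| \le C\,w(s,t)^{\zeta}\,(1+\sup_{r\in[s,t]}k_r)$ for all $s<t$. -/

import Mathlib

/-!
Perturb `w` to `w_θ(a, b) = w(a, b) + θ (b - a)`. By the intermediate value theorem every interval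
`[a, b]` splits at a point `m` where both halves carry at most half of `w_θ(a, b)`, and then
`g_{ab} = δg_{amb} + g_{am} + g_{mb}`. With `K = sup_{[s,t]} k`, induction on the number of
halvings gives `|g_{ab}| ≤ C (1 + K) w_θ(a, b)^ζ + θ w_*(a, b)` for `C = (1 - 2^{1-ζ})⁻¹`, the
fixed point of `C ↦ 1 + 2^{1-ζ} C`: the remainder `θ w_*` is superadditive, and the induction
starts on intervals so short that `w_*^{ζ-1} ≤ θ`, where `|g| ≤ w_*^ζ ≤ θ w_*`. Let `θ → 0`.
-/

/-- A two-parameter function `w` is a control on `[0,T]`: continuous,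
vanishing on the diagonal, nonnegative and superadditive. -/
def IsControl (T : ℝ) (w : ℝ → ℝ → ℝ) : Prop :=
  Continuous (fun p : ℝ × ℝ => w p.1 p.2) ∧
  (∀ s, w s s = 0) ∧
  (∀ s t, 0 ≤ w s t) ∧
  (∀ s u t : ℝ, 0 ≤ s → s ≤ u → u ≤ t → t ≤ T → w s u + w u t ≤ w s t)

open Set

theorem IsCompact.exists_pos_le_of_dist_le_of_diag_eq_zero {X : Type*} [PseudoMetricSpace X]
    {K : Set X} (hK : IsCompact K) {f : X → X → ℝ}
    (hf : Continuous fun p : X × X => f p.1 p.2) (hdiag : ∀ x, f x x = 0) {θ : ℝ} (hθ : 0 < θ) :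
    ∃ η > 0, ∀ x ∈ K, ∀ y ∈ K, dist x y ≤ η → f x y ≤ θ := by
  obtain ⟨η, hη, hunif⟩ := Metric.uniformContinuousOn_iff_le.mp
    ((hK.prod hK).uniformContinuousOn_of_continuous hf.continuousOn) θ hθ
  refine ⟨η, hη, fun x hx y hy hxy => ?_⟩
  have hdist : dist (x, y) (x, x) ≤ η := by
    simpa [Prod.dist_eq, dist_comm] using hxy
  have := hunif (x, y) ⟨hx, hy⟩ (x, x) ⟨hx, hx⟩ hdist
  rw [Real.dist_eq, hdiag, sub_zero] at this
  exact (le_abs_self _).trans this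

theorem IsControl.exists_balanced_split {T : ℝ} {w : ℝ → ℝ → ℝ} (hw : IsControl T w) {ε : ℝ}
    (hε : 0 < ε) {a b : ℝ} (ha : 0 ≤ a) (hab : a < b) (hb : b ≤ T) :
    ∃ m ∈ Ioo a b, w a m + ε * (m - a) ≤ (w a b + ε * (b - a)) / 2 ∧
      w m b + ε * (b - m) ≤ (w a b + ε * (b - a)) / 2 := by
  obtain ⟨hcont, hdiag, hnonneg, hsuper⟩ := hw
  set f : ℝ → ℝ := fun u => (w a u + ε * (u - a)) - (w u b + ε * (b - u))
  have hf : Continuous f := by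
    have h₁ : Continuous fun u => w a u := hcont.comp (continuous_const.prodMk continuous_id)
    have h₂ : Continuous fun u => w u b := hcont.comp (continuous_id.prodMk continuous_const)
    fun_prop
  have hpos : 0 < w a b + ε * (b - a) := by nlinarith [hnonneg a b]
  have hzero : (0 : ℝ) ∈ Ioo (f a) (f b) := by
    simp only [f, hdiag, mem_Ioo]
    constructor <;> linarith
  obtain ⟨m, hm, hfm⟩ := intermediate_value_Ioo hab.le hf.continuousOn hzero
  have := hsuper a m b ha hm.1.le hm.2.le hb
  exact ⟨m, hm, by simp only [f] at hfm; constructor <;> linarith⟩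

section BalancedSplit

variable {E : Type*} [SeminormedAddCommGroup E] {g : ℝ → ℝ → E} {W V : ℝ → ℝ → ℝ}
  {s t ζ A C ρ : ℝ}

theorem two_mul_div_two_rpow {x : ℝ} (hx : 0 ≤ x) (ζ : ℝ) :
    2 * (x / 2) ^ ζ = 2 ^ (1 - ζ) * x ^ ζ := by
  rw [Real.div_rpow hx zero_le_two, Real.rpow_sub zero_lt_two, Real.rpow_one]
  ring

theorem norm_le_of_balanced_split_of_le_two_pow_mul (hζ : 0 ≤ ζ) (hA : 0 ≤ A) (hC₀ : 0 ≤ C)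
    (hC : 1 + 2 ^ (1 - ζ) * C ≤ C)
    (hW : ∀ a b, s ≤ a → a < b → b ≤ t → 0 ≤ W a b)
    (hsplit : ∀ a b, s ≤ a → a < b → b ≤ t →
      ∃ m ∈ Ioo a b, W a m ≤ W a b / 2 ∧ W m b ≤ W a b / 2)
    (hV : ∀ a m b, s ≤ a → a < m → m < b → b ≤ t → V a m + V m b ≤ V a b)
    (hδ : ∀ a m b, s ≤ a → a < m → m < b → b ≤ t → ‖g a b - g m b - g a m‖ ≤ A * W a b ^ ζ)
    (hsmall : ∀ a b, s ≤ a → a < b → b ≤ t → W a b ≤ ρ → ‖g a b‖ ≤ V a b) (n : ℕ) :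
    ∀ a b, s ≤ a → a < b → b ≤ t → W a b ≤ 2 ^ n * ρ → ‖g a b‖ ≤ C * A * W a b ^ ζ + V a b := by
  induction n with
  | zero =>
    intro a b ha hab hb hWρ
    exact (hsmall a b ha hab hb (by simpa using hWρ)).trans <| le_add_of_nonneg_left <|
      mul_nonneg (mul_nonneg hC₀ hA) (Real.rpow_nonneg (hW a b ha hab hb) ζ)
  | succ n ih =>
    intro a b ha hab hb hWρ
    obtain ⟨m, ⟨ham, hmb⟩, ham_le, hmb_le⟩ := hsplit a b ha hab hb
    have hWab := hW a b ha hab hb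
    have hpow {x : ℝ} (hx₀ : 0 ≤ x) (hx : x ≤ W a b / 2) : x ^ ζ ≤ (W a b / 2) ^ ζ :=
      Real.rpow_le_rpow hx₀ hx hζ
    have hleft := ih a m ha ham (hmb.le.trans hb) (by rw [pow_succ] at hWρ; linarith)
    have hright := ih m b (ha.trans ham.le) hmb hb (by rw [pow_succ] at hWρ; linarith)
    have hWam := hpow (hW a m ha ham (hmb.le.trans hb)) ham_le
    have hWmb := hpow (hW m b (ha.trans ham.le) hmb hb) hmb_le
    have hhalf := two_mul_div_two_rpow hWab ζ
    have hCA : 0 ≤ C * A := mul_nonneg hC₀ hA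
    calc ‖g a b‖ ≤ ‖g a b - g m b - g a m‖ + ‖g a m‖ + ‖g m b‖ := by
          simpa using norm_add₃_le (a := g a b - g m b - g a m) (b := g a m) (c := g m b)
      _ ≤ A * W a b ^ ζ + C * A * (2 * (W a b / 2) ^ ζ) + (V a m + V m b) := by
          have := hδ a m b ha ham hmb hb
          nlinarith [mul_le_mul_of_nonneg_left hWam hCA, mul_le_mul_of_nonneg_left hWmb hCA]
      _ ≤ C * A * W a b ^ ζ + V a b := by
          rw [hhalf]
          have := hV a m b ha ham hmb hb
          have := mul_le_mul_of_nonneg_right hC (mul_nonneg hA (Real.rpow_nonneg hWab ζ))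
          nlinarith

theorem norm_le_of_balanced_split (hζ : 0 ≤ ζ) (hA : 0 ≤ A) (hC₀ : 0 ≤ C)
    (hC : 1 + 2 ^ (1 - ζ) * C ≤ C)
    (hW : ∀ a b, s ≤ a → a < b → b ≤ t → 0 ≤ W a b)
    (hsplit : ∀ a b, s ≤ a → a < b → b ≤ t →
      ∃ m ∈ Ioo a b, W a m ≤ W a b / 2 ∧ W m b ≤ W a b / 2)
    (hV : ∀ a m b, s ≤ a → a < m → m < b → b ≤ t → V a m + V m b ≤ V a b)
    (hδ : ∀ a m b, s ≤ a → a < m → m < b → b ≤ t → ‖g a b - g m b - g a m‖ ≤ A * W a b ^ ζ)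
    (hρ : 0 < ρ) (hsmall : ∀ a b, s ≤ a → a < b → b ≤ t → W a b ≤ ρ → ‖g a b‖ ≤ V a b)
    (hst : s < t) : ‖g s t‖ ≤ C * A * W s t ^ ζ + V s t := by
  obtain ⟨n, hn⟩ := pow_unbounded_of_one_lt (W s t / ρ) one_lt_two
  exact norm_le_of_balanced_split_of_le_two_pow_mul hζ hA hC₀ hC hW hsplit hV hδ hsmall n
    s t le_rfl hst le_rfl ((div_le_iff₀ hρ).mp hn.le)

end BalancedSplit

theorem rpow_le_mul_of_rpow_sub_one_le {x ζ θ : ℝ} (hx : 0 ≤ x) (hζ : 1 < ζ)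
    (h : x ^ (ζ - 1) ≤ θ) : x ^ ζ ≤ θ * x := by
  calc x ^ ζ = x ^ (ζ - 1) * x := by
        rw [← Real.rpow_add_one' hx (by linarith), sub_add_cancel]
    _ ≤ θ * x := mul_le_mul_of_nonneg_right h hx

section AprioriSewing

variable {d : ℕ} {T ζ C K : ℝ} {w wstar : ℝ → ℝ → ℝ} {k : ℝ → ℝ}
  {g : ℝ → ℝ → EuclideanSpace ℝ (Fin d)}

theorem norm_le_of_add_length_control (hζ : 1 < ζ) (hC₀ : 0 ≤ C) (hC : 1 + 2 ^ (1 - ζ) * C ≤ C)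
    (hw : IsControl T w) (hwstar : IsControl T wstar)
    (hδ : ∀ s u t : ℝ, 0 ≤ s → s < u → u < t → t ≤ T →
      ‖g s t - g u t - g s u‖ ≤ w s t ^ ζ * (1 + k s))
    (hgstar : ∀ s t : ℝ, 0 ≤ s → s < t → t ≤ T → ‖g s t‖ ≤ wstar s t ^ ζ)
    {s t : ℝ} (hs : 0 ≤ s) (hst : s < t) (ht : t ≤ T)
    (hK : 0 ≤ K) (hkK : ∀ r ∈ Icc s t, k r ≤ K) {θ : ℝ} (hθ : 0 < θ) :
    ‖g s t‖ ≤ C * (1 + K) * (w s t + θ * (t - s)) ^ ζ + θ * wstar s t := by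
  have hwstar_pow : Continuous fun p : ℝ × ℝ => wstar p.1 p.2 ^ (ζ - 1) :=
    hwstar.1.rpow_const fun _ => Or.inr (by linarith)
  obtain ⟨η, hη, hnear⟩ := isCompact_Icc.exists_pos_le_of_dist_le_of_diag_eq_zero
    (f := fun a b => wstar a b ^ (ζ - 1)) hwstar_pow
    (fun a => by rw [hwstar.2.1, Real.zero_rpow (by linarith)]) hθ (K := Icc 0 T)
  refine norm_le_of_balanced_split (W := fun a b => w a b + θ * (b - a))
    (V := fun a b => θ * wstar a b) (ρ := θ * η) (by linarith) ?_ hC₀ hC ?_ ?_ ?_ ?_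
    (mul_pos hθ hη) ?_ hst
  · linarith
  · intro a b ha hab _
    nlinarith [hw.2.2.1 a b]
  · intro a b ha hab hb
    exact hw.exists_balanced_split hθ (hs.trans ha) hab (hb.trans ht)
  · intro a m b ha ham hmb hb
    have := hwstar.2.2.2 a m b (hs.trans ha) ham.le hmb.le (hb.trans ht)
    nlinarith
  · intro a m b ha ham hmb hb
    have hwab := hw.2.2.1 a b
    have hw_le : w a b ^ ζ ≤ (w a b + θ * (b - a)) ^ ζ :=
      Real.rpow_le_rpow hwab (by nlinarith) (by linarith)
    have hka : k a ≤ K := hkK a ⟨ha, (ham.trans hmb).le.trans hb⟩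
    calc ‖g a b - g m b - g a m‖ ≤ w a b ^ ζ * (1 + k a) :=
          hδ a m b (hs.trans ha) ham hmb (hb.trans ht)
      _ ≤ (1 + K) * (w a b + θ * (b - a)) ^ ζ := by
          nlinarith [Real.rpow_nonneg hwab ζ]
  · intro a b ha hab hb hsmall
    have hlen : dist a b ≤ η := by
      rw [Real.dist_eq, abs_sub_comm, abs_of_pos (sub_pos.mpr hab)]
      nlinarith [hw.2.2.1 a b]
    have hmemT {r : ℝ} (h₁ : s ≤ r) (h₂ : r ≤ t) : r ∈ Icc 0 T := ⟨hs.trans h₁, h₂.trans ht⟩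
    exact (hgstar a b (hs.trans ha) hab (hb.trans ht)).trans <|
      rpow_le_mul_of_rpow_sub_one_le (hwstar.2.2.1 a b) hζ <|
        hnear a (hmemT ha (hab.le.trans hb)) b (hmemT (ha.trans hab.le) hb) hlen

end AprioriSewing

open Filter Topology in
/-- A priori sewing estimate: if `|δg_{sut}| ≤ w(s,t)^ζ (1 + k_s)` and
`|g_{st}| ≤ w_*(s,t)^ζ` for controls `w, w_*` and `ζ > 1`, then there is a
universal constant `C = C(ζ)` with
`|g_{st}| ≤ C w(s,t)^ζ (1 + sup_{r ∈ [s,t]} k_r)`. -/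
theorem stmt_15 :
    ∀ ζ : ℝ, 1 < ζ → ∃ C : ℝ, 0 < C ∧
      ∀ (d : ℕ) (T : ℝ) (w wstar : ℝ → ℝ → ℝ) (k : ℝ → ℝ)
        (g : ℝ → ℝ → EuclideanSpace ℝ (Fin d)),
        0 < T →
        IsControl T w → IsControl T wstar →
        (∀ r, 0 ≤ k r) → BddAbove (k '' Set.Icc 0 T) →
        Continuous (fun p : ℝ × ℝ => g p.1 p.2) →
        (∀ s u t : ℝ, 0 ≤ s → s < u → u < t → t ≤ T →
          ‖g s t - g u t - g s u‖ ≤ w s t ^ ζ * (1 + k s)) →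
        (∀ s t : ℝ, 0 ≤ s → s < t → t ≤ T → ‖g s t‖ ≤ wstar s t ^ ζ) →
        ∀ s t : ℝ, 0 ≤ s → s < t → t ≤ T →
          ‖g s t‖ ≤ C * w s t ^ ζ * (1 + sSup (k '' Set.Icc s t)) := by
  intro ζ hζ
  have hr : (2 : ℝ) ^ (1 - ζ) < 1 := Real.rpow_lt_one_of_one_lt_of_neg one_lt_two (by linarith)
  set C := (1 - (2 : ℝ) ^ (1 - ζ))⁻¹
  have hC₀ : 0 < C := inv_pos.mpr (by linarith)
  have hC : 1 + 2 ^ (1 - ζ) * C ≤ C := by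
    have : (1 - (2 : ℝ) ^ (1 - ζ)) * C = 1 := mul_inv_cancel₀ (by linarith)
    linarith
  refine ⟨C, hC₀, fun d T w wstar k g _ hw hwstar hk hbdd _ hδ hgstar s t hs hst ht => ?_⟩
  set K := sSup (k '' Icc s t)
  have hkK : ∀ r ∈ Icc s t, k r ≤ K := fun r hr =>
    le_csSup (hbdd.mono (image_mono (Icc_subset_Icc hs ht))) (mem_image_of_mem k hr)
  have hK : 0 ≤ K := (hk s).trans (hkK s ⟨le_rfl, hst.le⟩)
  have hF : Continuous fun θ : ℝ => C * (1 + K) * (w s t + θ * (t - s)) ^ ζ + θ * wstar s t := by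
    fun_prop (disch := linarith)
  have hlim := (hF.tendsto 0).mono_left (nhdsWithin_le_nhds (s := Ioi 0))
  simp only [zero_mul, add_zero] at hlim
  rw [mul_right_comm]
  exact ge_of_tendsto hlim <| eventually_nhdsWithin_of_forall fun θ hθ =>
    norm_le_of_add_length_control hζ hC₀.le hC hw hwstar hδ hgstar hs hst ht hK hkK hθ
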